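/- arXiv:1810.03634 — 3 statements merged into one kernel-verified Lean document; each statement's English description precedes it below -/
import Mathlib

section
/- If ρ is a smooth, rapidly decaying solution of the 2D Keller–Segel equation with mass M > 8π and finite initial second moment, then the solution cannot remain smooth and rapidly decaying for all time; specifically, any smooth solution must break down by time T* = M₂(0)/(4M(M/(8π) − 1)), since the second moment would become negative. -/
open MeasureTheory Real Filter Set

/-! The second moment `M₂(t) = ∫ |x|² ρ(t,x) dx` is nonnegative, while the virial identity makes
it affine in `t` with slope `4M(1 - M/(8π)) < 0` as long as the solution exists. An affine
function with negative slope that stays nonnegative on `[0, T)` forces `T ≤ M₂(0) / (-slope)`. -/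

theorem eq_add_mul_sub_of_hasDerivAt_const {f : ℝ → ℝ} {a b c : ℝ}
    (hf : ∀ t ∈ Ico a b, HasDerivAt f c t) :
    ∀ t ∈ Ico a b, f t = f a + c * (t - a) := by
  rintro t ⟨hat, htb⟩
  have hf' : ∀ s ∈ Icc a t, HasDerivAt f c s := fun s hs => hf s ⟨hs.1, hs.2.trans_lt htb⟩
  have hline : ∀ s, HasDerivAt (fun s => f a + c * (s - a)) c s := fun s => by
    simpa using ((hasDerivAt_id s).sub_const a).const_mul c |>.const_add (f a)
  refine eq_of_has_deriv_right_eq (f' := fun _ => c)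
    (fun s hs => (hf' s (Ico_subset_Icc_self hs)).hasDerivWithinAt)
    (fun s _ => (hline s).hasDerivWithinAt)
    (fun s hs => (hf' s hs).continuousAt.continuousWithinAt)
    (fun s _ => (hline s).continuousAt.continuousWithinAt)
    (by ring) t ⟨hat, le_rfl⟩

theorem sub_le_div_neg_of_hasDerivAt_const_of_nonneg {f : ℝ → ℝ} {a b c : ℝ} (hab : a < b)
    (hc : c < 0) (hf : ∀ t ∈ Ico a b, HasDerivAt f c t) (hnn : ∀ t ∈ Ico a b, 0 ≤ f t) :
    b - a ≤ f a / -c := by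
  refine le_of_forall_lt_imp_le_of_dense fun s hs => ?_
  rcases le_or_gt s 0 with hs0 | hs0
  · exact hs0.trans (div_nonneg (hnn a ⟨le_rfl, hab⟩) (neg_nonneg.2 hc.le))
  · have ht : a + s ∈ Ico a b := ⟨by linarith, by linarith⟩
    have hline := eq_add_mul_sub_of_hasDerivAt_const hf (a + s) ht
    rw [le_div_iff₀ (neg_pos.2 hc)]
    nlinarith [hnn (a + s) ht]

theorem keller_segel_blowup_general (T : ℝ) (hT : 0 < T) (ρ : ℝ → (Fin 2 → ℝ) → ℝ) (M : ℝ)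
    (hnn : ∀ t x, 0 ≤ ρ t x)
    (hM : 8 * π < M)
    (hvirial : ∀ t ∈ Ico (0 : ℝ) T,
      HasDerivAt (fun s => ∫ x, (∑ i, x i ^ 2) * ρ s x)
        (4 * M * (1 - M / (8 * π))) t) :
    T ≤ (∫ x, (∑ i, x i ^ 2) * ρ 0 x) / (4 * M * (M / (8 * π) - 1)) := by
  have hslope : 4 * M * (1 - M / (8 * π)) < 0 := by
    have h8π : 0 < 8 * π := by positivity
    have : 1 < M / (8 * π) := (one_lt_div h8π).2 hM
    nlinarith
  have hmoment_nonneg : ∀ t ∈ Ico (0 : ℝ) T, 0 ≤ ∫ x, (∑ i, x i ^ 2) * ρ t x := fun t _ =>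
    integral_nonneg fun x => mul_nonneg (Finset.sum_nonneg fun i _ => sq_nonneg (x i)) (hnn t x)
  have hbound := sub_le_div_neg_of_hasDerivAt_const_of_nonneg hT hslope hvirial hmoment_nonneg
  rwa [sub_zero, neg_mul_eq_mul_neg, neg_sub] at hbound

/-- Finite time blow-up for supercritical mass in the 2D Keller–Segel equation: if the
mass satisfies `M > 8π`, the initial second moment is finite, and the virial identity
`d/dt M₂ = 4M(1 − M/(8π))` holds along the (nonnegative) solution on `[0,T)`, then the
solution must break down by time `T* = M₂(0)/(4M(M/(8π) − 1))`, i.e. `T ≤ T*`,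
since otherwise the second moment would become negative. -/
theorem keller_segel_blowup (T : ℝ) (hT : 0 < T) (ρ : ℝ → (Fin 2 → ℝ) → ℝ) (M : ℝ)
    (hnn : ∀ t x, 0 ≤ ρ t x)
    (hmass : ∀ t ∈ Ico (0 : ℝ) T, ∫ x, ρ t x = M)
    (hM : 8 * π < M)
    (hm2 : Integrable (fun x : Fin 2 → ℝ => (∑ i, x i ^ 2) * ρ 0 x))
    (hvirial : ∀ t ∈ Ico (0 : ℝ) T,
      HasDerivAt (fun s => ∫ x, (∑ i, x i ^ 2) * ρ s x)
        (4 * M * (1 - M / (8 * π))) t) :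
    T ≤ (∫ x, (∑ i, x i ^ 2) * ρ 0 x) / (4 * M * (M / (8 * π) - 1)) :=
  keller_segel_blowup_general T hT ρ M hnn hM hvirial
end

section
/- Let W ∈ L¹(ℝ^d) with ∫W < −2, and for m = 2 define E[ρ] = ∫ρ² + (1/2)∫ρ(ρ*W). Then for any bounded continuous nonnegative ρ with ∫ρ² > 0 and finite mass, E[ρ_λ] < 0 for all sufficiently small λ > 0, where ρ_λ(x) = λ^dρ(λx). In particular inf E < 0 over densities of any fixed mass M. -/
/-!
Dilation multiplies both terms of the energy by `λ ^ d`: the quadratic term exactly, the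
interaction term as `λ ^ d * ∫ W y * g (λ • y)`, where `g z = ∫ ρ u * ρ (u - z)` is the
autocorrelation of `ρ` (Fubini and a change of variables). As `g` is bounded and continuous with
`g 0 = ∫ ρ ^ 2`, dominated convergence gives
`E[ρ_λ] / λ ^ d → (∫ ρ ^ 2) * (1 + (∫ W) / 2) < 0` as `λ → 0⁺`.
-/

open MeasureTheory Filter Topology Module
open scoped Convolution

noncomputable def autocorrelation {G : Type*} [MeasurableSpace G] [Sub G] (μ : Measure G)
    (f : G → ℝ) (z : G) : ℝ :=
  ∫ u, f u * f (u - z) ∂μ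

section Autocorrelation

variable {G : Type*} [NormedAddCommGroup G] [MeasurableSpace G] {μ : Measure G} {f : G → ℝ}
  {C : ℝ}

variable (μ f) in
theorem autocorrelation_zero :
    autocorrelation μ f 0 = ∫ x, f x ^ 2 ∂μ := by
  simp [autocorrelation, sq]

variable (μ f) in
theorem autocorrelation_eq_convolution :
    autocorrelation μ f = f ⋆[ContinuousLinearMap.lsmul ℝ ℝ, μ] fun x => f (-x) := by
  ext z
  simp [autocorrelation, convolution_lsmul, neg_sub]

theorem continuous_autocorrelation [BorelSpace G] [SecondCountableTopology G] (hf : Continuous f)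
    (hfC : ∀ x, |f x| ≤ C) (hfi : Integrable f μ) : Continuous (autocorrelation μ f) := by
  have hbdd : BddAbove (Set.range fun x => ‖f (-x)‖) :=
    ⟨C, by rintro _ ⟨x, rfl⟩; exact hfC (-x)⟩
  rw [autocorrelation_eq_convolution]
  exact hbdd.continuous_convolution_right_of_integrable _ hfi (hf.comp continuous_neg)

theorem abs_autocorrelation_le (hfC : ∀ x, |f x| ≤ C) (hfi : Integrable f μ) (z : G) :
    |autocorrelation μ f z| ≤ C * ∫ x, |f x| ∂μ := by
  rw [← integral_const_mul]
  refine abs_integral_le_integral_abs.trans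
    (integral_mono_of_nonneg (Eventually.of_forall fun u => abs_nonneg _) (hfi.abs.const_mul C)
      (Eventually.of_forall fun u => ?_))
  simp only [abs_mul, mul_comm C]
  exact mul_le_mul_of_nonneg_left (hfC _) (abs_nonneg _)

end Autocorrelation

section HaarSpace

variable {E : Type*} [NormedAddCommGroup E] [NormedSpace ℝ E] [FiniteDimensional ℝ E]
  [MeasurableSpace E] [BorelSpace E] {μ : Measure E} [μ.IsAddHaarMeasure]

theorem integral_pow_finrank_mul_comp_smul (f : E → ℝ) {l : ℝ} (hl : 0 < l) :
    ∫ x, l ^ finrank ℝ E * f (l • x) ∂μ = ∫ x, f x ∂μ := by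
  rw [integral_const_mul, Measure.integral_comp_smul_of_nonneg μ f l (hR := hl.le),
    smul_eq_mul, mul_inv_cancel_left₀ (pow_ne_zero _ hl.ne')]

theorem integral_sq_pow_finrank_mul_comp_smul (f : E → ℝ) {l : ℝ} (hl : 0 < l) :
    ∫ x, (l ^ finrank ℝ E * f (l • x)) ^ 2 ∂μ = l ^ finrank ℝ E * ∫ x, f x ^ 2 ∂μ := by
  rw [← integral_pow_finrank_mul_comp_smul (μ := μ) (fun x => f x ^ 2) hl,
    ← integral_const_mul]
  congr 1 with x
  ring

theorem autocorrelation_pow_finrank_mul_comp_smul (f : E → ℝ) {l : ℝ} (hl : 0 < l) (z : E) :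
    autocorrelation μ (fun x => l ^ finrank ℝ E * f (l • x)) z
      = l ^ finrank ℝ E * autocorrelation μ f (l • z) := by
  rw [autocorrelation, autocorrelation,
    ← integral_pow_finrank_mul_comp_smul (fun u => f u * f (u - l • z)) hl,
    ← integral_const_mul]
  congr 1 with x
  rw [smul_sub]
  ring

theorem integral_mul_integral_mul_sub_eq_integral_autocorrelation {f W : E → ℝ} {C : ℝ}
    (hfC : ∀ x, |f x| ≤ C) (hfi : Integrable f μ) (hW : Integrable W μ) :
    ∫ x, f x * ∫ y, f y * W (x - y) ∂μ ∂μ = ∫ y, W y * autocorrelation μ f y ∂μ := by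
  have hF : Integrable (fun p : E × E => f p.1 * f (p.1 - p.2) * W p.2) (μ.prod μ) := by
    refine ((hfi.abs.const_mul C).mul_prod hW.abs).mono' ?_ (Eventually.of_forall fun p => ?_)
    · exact (hfi.aestronglyMeasurable.comp_fst.mul
        (hfi.aestronglyMeasurable.comp_quasiMeasurePreserving
          (quasiMeasurePreserving_sub_of_right_invariant μ μ))).mul
        hW.aestronglyMeasurable.comp_snd
    · rw [Real.norm_eq_abs, abs_mul, abs_mul, mul_comm C]
      gcongr
      exact hfC _
  calc ∫ x, f x * ∫ y, f y * W (x - y) ∂μ ∂μ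
      = ∫ x, ∫ y, f x * f (x - y) * W y ∂μ ∂μ := by
        congr 1 with x
        rw [← integral_sub_left_eq_self _ μ x, ← integral_const_mul]
        simp only [sub_sub_cancel, mul_assoc]
    _ = ∫ y, ∫ x, f x * f (x - y) * W y ∂μ ∂μ := integral_integral_swap hF
    _ = ∫ y, W y * autocorrelation μ f y ∂μ := by
        simp only [integral_mul_const, autocorrelation, mul_comm (W _)]

theorem energy_pow_finrank_mul_comp_smul {f W : E → ℝ} {C : ℝ} (hfC : ∀ x, |f x| ≤ C)
    (hfi : Integrable f μ) (hW : Integrable W μ) {l : ℝ} (hl : 0 < l) :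
    (∫ x, (l ^ finrank ℝ E * f (l • x)) ^ 2 ∂μ)
        + (1 / 2) * (∫ x, (l ^ finrank ℝ E * f (l • x))
          * ∫ y, (l ^ finrank ℝ E * f (l • y)) * W (x - y) ∂μ ∂μ)
      = l ^ finrank ℝ E
        * ((∫ x, f x ^ 2 ∂μ) + (1 / 2) * ∫ y, W y * autocorrelation μ f (l • y) ∂μ) := by
  have hlC : ∀ x, |l ^ finrank ℝ E * f (l • x)| ≤ l ^ finrank ℝ E * C := fun x => by
    rw [abs_mul, abs_of_pos (pow_pos hl _)]
    exact mul_le_mul_of_nonneg_left (hfC _) (pow_pos hl _).le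
  rw [integral_sq_pow_finrank_mul_comp_smul f hl,
    integral_mul_integral_mul_sub_eq_integral_autocorrelation hlC
      ((hfi.comp_smul hl.ne').const_mul _) hW]
  simp only [autocorrelation_pow_finrank_mul_comp_smul f hl, mul_left_comm (W _),
    integral_const_mul]
  ring

end HaarSpace

theorem tendsto_integral_mul_comp_smul {E : Type*} [NormedAddCommGroup E] [NormedSpace ℝ E]
    [MeasurableSpace E] [OpensMeasurableSpace E] {μ : Measure E} {W g : E → ℝ} {C : ℝ}
    (hW : Integrable W μ) (hg : Continuous g) (hgC : ∀ x, |g x| ≤ C) :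
    Tendsto (fun l : ℝ => ∫ y, W y * g (l • y) ∂μ) (𝓝 0) (𝓝 ((∫ y, W y ∂μ) * g 0)) := by
  rw [← integral_mul_const]
  refine tendsto_integral_filter_of_dominated_convergence (fun y => |W y| * C)
    (Eventually.of_forall fun l => hW.aestronglyMeasurable.mul
      (hg.comp (continuous_const_smul l)).aestronglyMeasurable)
    (Eventually.of_forall fun l => Eventually.of_forall fun y => ?_) (hW.abs.mul_const C)
    (Eventually.of_forall fun y => ?_)
  · rw [Real.norm_eq_abs, abs_mul]
    exact mul_le_mul_of_nonneg_left (hgC _) (abs_nonneg _)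
  · have h : Tendsto (fun l : ℝ => l • y) (𝓝 0) (𝓝 0) := by
      simpa using (tendsto_id (x := 𝓝 (0 : ℝ))).smul_const y
    exact ((hg.tendsto 0).comp h).const_mul (W y)

theorem critical_power_negative_energy_general (d : ℕ) (W ρ : (Fin d → ℝ) → ℝ)
    (hW : Integrable W) (hWneg : (∫ x, W x) < -2)
    (hρc : Continuous ρ) (hρb : ∃ C, ∀ x, ρ x ≤ C)
    (hnn : ∀ x, 0 ≤ ρ x) (hint : Integrable ρ)
    (hpos : 0 < ∫ x, ρ x ^ 2) :
    (∀ᶠ l in nhdsWithin (0 : ℝ) (Set.Ioi 0),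
      (∫ x, (l ^ d * ρ (l • x)) ^ 2)
        + (1 / 2) * (∫ x, (l ^ d * ρ (l • x)) * ∫ y, (l ^ d * ρ (l • y)) * W (x - y)) < 0)
    ∧ ∃ l : ℝ, 0 < l ∧
      (∫ x, (l ^ d * ρ (l • x)) ^ 2)
        + (1 / 2) * (∫ x, (l ^ d * ρ (l • x)) * ∫ y, (l ^ d * ρ (l • y)) * W (x - y)) < 0
      ∧ (∫ x, l ^ d * ρ (l • x)) = ∫ x, ρ x := by
  obtain ⟨C, hC⟩ := hρb
  have hρC : ∀ x, |ρ x| ≤ C := fun x => (abs_of_nonneg (hnn x)).trans_le (hC x)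
  have hlim : Tendsto
      (fun l : ℝ => (∫ x, ρ x ^ 2) + 1 / 2 * ∫ y, W y * autocorrelation volume ρ (l • y)) (𝓝 0)
      (𝓝 ((∫ x, ρ x ^ 2) + 1 / 2 * ((∫ y, W y) * ∫ x, ρ x ^ 2))) := by
    rw [← autocorrelation_zero]
    exact tendsto_const_nhds.add <| (tendsto_integral_mul_comp_smul hW
      (continuous_autocorrelation hρc hρC hint) (abs_autocorrelation_le hρC hint)).const_mul _
  have hneg : (∫ x, ρ x ^ 2) + 1 / 2 * ((∫ y, W y) * ∫ x, ρ x ^ 2) < 0 := by nlinarith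
  have hev : ∀ᶠ l in 𝓝[>] (0 : ℝ), (∫ x, (l ^ d * ρ (l • x)) ^ 2)
      + (1 / 2) * (∫ x, (l ^ d * ρ (l • x)) * ∫ y, (l ^ d * ρ (l • y)) * W (x - y)) < 0 := by
    filter_upwards [(hlim.mono_left nhdsWithin_le_nhds).eventually_lt_const hneg,
      self_mem_nhdsWithin] with l hl_neg hl_pos
    have h := energy_pow_finrank_mul_comp_smul (μ := volume) hρC hint hW hl_pos
    rw [finrank_fin_fun] at h
    rw [h]
    exact mul_neg_of_pos_of_neg (pow_pos hl_pos d) hl_neg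
  obtain ⟨l, hl_neg, hl_pos⟩ := (hev.and self_mem_nhdsWithin).exists
  have hmass := integral_pow_finrank_mul_comp_smul (μ := volume) ρ hl_pos
  rw [finrank_fin_fun] at hmass
  exact ⟨hev, l, hl_pos, hl_neg, hmass⟩

/-- For `W ∈ L¹(ℝ^d)` with `∫ W < −2` and `m = 2`, the energy
`E[ρ] = ∫ ρ² + (1/2) ∫ ρ (ρ*W)` satisfies `E[ρ_λ] < 0` for all sufficiently small
`λ > 0`, where `ρ_λ(x) = λ^d ρ(λx)`; in particular, there is a density of the same
mass `M = ∫ ρ` with negative energy, so `inf E < 0` among densities of mass `M`. -/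
theorem critical_power_negative_energy (d : ℕ) (W ρ : (Fin d → ℝ) → ℝ)
    (hW : Integrable W) (hWneg : (∫ x, W x) < -2)
    (hρc : Continuous ρ) (hρb : ∃ C, ∀ x, ρ x ≤ C)
    (hnn : ∀ x, 0 ≤ ρ x) (hint : Integrable ρ)
    (hsq : Integrable (fun x => ρ x ^ 2)) (hpos : 0 < ∫ x, ρ x ^ 2) :
    (∀ᶠ l in nhdsWithin (0 : ℝ) (Set.Ioi 0),
      (∫ x, (l ^ d * ρ (l • x)) ^ 2)
        + (1 / 2) * (∫ x, (l ^ d * ρ (l • x)) * ∫ y, (l ^ d * ρ (l • y)) * W (x - y)) < 0)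
    ∧ ∃ l : ℝ, 0 < l ∧
      (∫ x, (l ^ d * ρ (l • x)) ^ 2)
        + (1 / 2) * (∫ x, (l ^ d * ρ (l • x)) * ∫ y, (l ^ d * ρ (l • y)) * W (x - y)) < 0
      ∧ (∫ x, l ^ d * ρ (l • x)) = ∫ x, ρ x :=
  critical_power_negative_energy_general d W ρ hW hWneg hρc hρb hnn hint hpos
end

section
/- Γ-limit of the entropy under slow diffusion at fixed density: for any nonnegative measurable ρ on ℝ^d, lim_{m→∞} (1/(m−1))∫ρ^m dx = 0 if ‖ρ‖_∞ ≤ 1 and ∫ρ^m dx is finite for some m, while if |{ρ > 1+δ}| > 0 for some δ > 0 then lim_{m→∞}(1/(m−1))∫ρ^m dx = +∞. Consequently, E_m[ρ] → E_∞[ρ] pointwise, where E_∞[ρ] = W[ρ] if ‖ρ‖_∞ ≤ 1 and +∞ otherwise. -/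
/-!
Where `ρ ≤ 1`, the power `ρ ^ m` decreases in `m`, so `∫ ρ ^ m` stays below `∫ ρ ^ m₀` while
`1 / (m - 1) → 0`. If instead `ρ > b > 1` on a set of positive measure, Markov's inequality gives
`∫ ρ ^ m ≥ b ^ m |{ρ > b}|`, and `b ^ m / (m - 1) → ∞` because exponentials beat linear growth.
-/

open MeasureTheory Real Filter

theorem Real.tendsto_rpow_div_sub_one_atTop {b : ℝ} (hb : 1 < b) :
    Tendsto (fun m : ℝ => b ^ m / (m - 1)) atTop atTop := by
  have hexp := tendsto_exp_mul_div_rpow_atTop 1 (log b) (log_pos hb)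
  refine tendsto_atTop_mono' atTop ?_ hexp
  filter_upwards [eventually_gt_atTop (1 : ℝ)] with m hm
  rw [rpow_one, rpow_def_of_pos (by linarith)]
  exact div_le_div_of_nonneg_left (exp_pos _).le (by linarith) (by linarith)

section

variable {α : Type*} [MeasurableSpace α] {μ : Measure α} {f : α → ℝ}

theorem tendsto_one_div_sub_one_mul_integral_rpow_of_ae_le_one (hf₀ : 0 ≤ᵐ[μ] f)
    (hf₁ : ∀ᵐ x ∂μ, f x ≤ 1) {m₀ : ℝ} (hm₀ : 0 ≤ m₀)
    (hint : Integrable (fun x => f x ^ m₀) μ) :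
    Tendsto (fun m : ℝ => 1 / (m - 1) * ∫ x, f x ^ m ∂μ) atTop (nhds 0) := by
  set C := ∫ x, f x ^ m₀ ∂μ
  have hpow₀ : ∀ m : ℝ, 0 ≤ᵐ[μ] fun x => f x ^ m := fun m =>
    hf₀.mono fun x hx => rpow_nonneg hx m
  have hbound : ∀ m, m₀ ≤ m → ∫ x, f x ^ m ∂μ ≤ C := fun m hm =>
    integral_mono_of_nonneg (hpow₀ m) hint <| (hf₀.and hf₁).mono fun x hx =>
      rpow_le_rpow_of_exponent_ge' hx.1 hx.2 hm₀ hm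
  have hupper : Tendsto (fun m : ℝ => 1 / (m - 1) * C) atTop (nhds 0) := by
    simpa [sub_eq_add_neg] using ((tendsto_inv_atTop_zero.comp
      (tendsto_atTop_add_const_right atTop (-1) tendsto_id)).mul_const C)
  have hlarge : ∀ᶠ m in atTop, 0 ≤ 1 / (m - 1) ∧ m₀ ≤ m :=
    (eventually_ge_atTop (max m₀ 1)).mono fun m hm =>
      ⟨one_div_nonneg.2 (sub_nonneg.2 (le_of_max_le_right hm)), le_of_max_le_left hm⟩
  refine tendsto_of_tendsto_of_tendsto_of_le_of_le' tendsto_const_nhds hupper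
    (hlarge.mono fun m hm => ?_) (hlarge.mono fun m hm => ?_)
  · exact mul_nonneg hm.1 (integral_nonneg_of_ae (hpow₀ m))
  · exact mul_le_mul_of_nonneg_left (hbound m hm.2) hm.1

theorem tendsto_ofReal_one_div_sub_one_mul_lintegral_rpow_atTop (hf : AEMeasurable f μ)
    {b : ℝ} (hb : 1 < b) (hμ : 0 < μ {x | b < f x}) :
    Tendsto (fun m : ℝ => ENNReal.ofReal (1 / (m - 1)) * ∫⁻ x, ENNReal.ofReal (f x ^ m) ∂μ)
      atTop (nhds ⊤) := by
  have hlow : Tendsto (fun m : ℝ => ENNReal.ofReal (b ^ m / (m - 1)) * μ {x | b < f x})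
      atTop (nhds ⊤) := by
    simpa [ENNReal.top_mul hμ.ne'] using
      ENNReal.Tendsto.mul_const (b := μ {x | b < f x})
        (ENNReal.tendsto_ofReal_atTop.comp (tendsto_rpow_div_sub_one_atTop hb))
        (Or.inl ENNReal.top_ne_zero)
  refine tendsto_nhds_top_mono hlow ?_
  filter_upwards [eventually_gt_atTop (1 : ℝ)] with m hm
  have hsub : {x | b < f x} ⊆ {x | ENNReal.ofReal (b ^ m) ≤ ENNReal.ofReal (f x ^ m)} :=
    fun x hx => ENNReal.ofReal_le_ofReal (rpow_le_rpow (by linarith) (le_of_lt hx) (by linarith))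
  calc ENNReal.ofReal (b ^ m / (m - 1)) * μ {x | b < f x}
      = ENNReal.ofReal (1 / (m - 1)) * (ENNReal.ofReal (b ^ m) * μ {x | b < f x}) := by
        rw [← mul_assoc, ← ENNReal.ofReal_mul (one_div_nonneg.2 (by linarith)), one_div_mul_eq_div]
    _ ≤ ENNReal.ofReal (1 / (m - 1)) * ∫⁻ x, ENNReal.ofReal (f x ^ m) ∂μ := by
        gcongr
        exact (mul_le_mul_right (measure_mono hsub) _).trans
          (mul_meas_ge_le_lintegral₀ (hf.pow_const m).ennreal_ofReal _)

end

theorem energy_slow_diffusion_limit_general (d : ℕ) (ρ : (Fin d → ℝ) → ℝ)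
    (hmeas : Measurable ρ) (hnn : ∀ x, 0 ≤ ρ x) (Wv : ℝ) :
    ((∀ᵐ x, ρ x ≤ 1) → (∃ m₀ : ℝ, 1 < m₀ ∧ Integrable (fun x => ρ x ^ m₀)) →
      Tendsto (fun m : ℝ => (1 / (m - 1)) * (∫ x, ρ x ^ m) + Wv) atTop (nhds Wv))
    ∧ ((∃ δ : ℝ, 0 < δ ∧ 0 < volume {x | 1 + δ < ρ x}) →
      Tendsto (fun m : ℝ =>
          ENNReal.ofReal (1 / (m - 1)) * ∫⁻ x, ENNReal.ofReal (ρ x ^ m))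
        atTop (nhds (⊤ : ENNReal))) := by
  constructor
  · rintro hle ⟨m₀, hm₀, hint⟩
    simpa using (tendsto_one_div_sub_one_mul_integral_rpow_of_ae_le_one
      (ae_of_all _ hnn) hle (by linarith) hint).add_const Wv
  · rintro ⟨δ, hδ, hvol⟩
    exact tendsto_ofReal_one_div_sub_one_mul_lintegral_rpow_atTop hmeas.aemeasurable
      (by linarith) hvol

/-- Pointwise (Γ-)limit of the aggregation-diffusion energy under slow diffusion: for a
nonnegative measurable integrable `ρ` and bounded interaction part `Wv = W[ρ]`,
if `ρ ≤ 1` a.e. and `ρ^{m₀}` is integrable for some `m₀ > 1`, then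
`E_m[ρ] = (1/(m−1)) ∫ ρ^m + Wv → Wv = E_∞[ρ]` as `m → ∞`; while if
`|{ρ > 1+δ}| > 0` for some `δ > 0`, then `(1/(m−1)) ∫ ρ^m → +∞`, so `E_m[ρ] → +∞ = E_∞[ρ]`. -/
theorem energy_slow_diffusion_limit (d : ℕ) (ρ : (Fin d → ℝ) → ℝ)
    (hmeas : Measurable ρ) (hnn : ∀ x, 0 ≤ ρ x) (hint : Integrable ρ) (Wv : ℝ) :
    ((∀ᵐ x, ρ x ≤ 1) → (∃ m₀ : ℝ, 1 < m₀ ∧ Integrable (fun x => ρ x ^ m₀)) →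
      Tendsto (fun m : ℝ => (1 / (m - 1)) * (∫ x, ρ x ^ m) + Wv) atTop (nhds Wv))
    ∧ ((∃ δ : ℝ, 0 < δ ∧ 0 < volume {x | 1 + δ < ρ x}) →
      Tendsto (fun m : ℝ =>
          ENNReal.ofReal (1 / (m - 1)) * ∫⁻ x, ENNReal.ofReal (ρ x ^ m))
        atTop (nhds (⊤ : ENNReal))) :=
  energy_slow_diffusion_limit_general d ρ hmeas hnn Wv
end
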